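/- There exist constants C > 0 and s₀ > 0 such that for every s ∈ (0, s₀) and every admissible γ attaining the infimum defining g₀(s), one has max_{t ∈ [0,1]} γ(t) ≤ C·s^{4/3}. -/

import Mathlib

open MeasureTheory Set Filter

/-- Hypotheses on the function `f₁` from Section 6.1 of the paper. -/
structure F1Hyp (ℓ ℓ₁ : ℝ) (f₁ : ℝ → ℝ) : Prop where
  hl : 0 < ℓ
  hl1 : 0 < ℓ₁
  cont : ContinuousOn f₁ (Icc 0 1)
  diff : ∃ d : ℝ → ℝ, ContinuousOn d (Ioc 0 1) ∧
    ∀ t ∈ Ioc (0:ℝ) 1, HasDerivWithinAt f₁ (d t) (Ioc 0 1) t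
  anti : StrictAntiOn f₁ (Icc 0 1)
  nonneg : ∀ t ∈ Icc (0:ℝ) 1, 0 ≤ f₁ t
  f10 : f₁ 0 = ℓ
  f11 : f₁ 1 = 0
  convexSqrt : ConvexOn ℝ (Icc 0 1) (fun u => f₁ (Real.sqrt u))
  lim0 : Tendsto (fun s => (f₁ s - ℓ + ℓ₁ * s) / s) (nhdsWithin 0 (Ioi 0)) (nhds 0)

/-- `γ` is admissible, with a.e. derivative `γ'` (absolute continuity is encoded by the
fundamental theorem of calculus representation with an `L¹` derivative). -/
def Admissible (γ γ' : ℝ → ℝ) : Prop :=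
  IntegrableOn γ' (Icc 0 1) ∧
  (∀ t ∈ Icc (0:ℝ) 1, γ t = ∫ u in (0:ℝ)..t, γ' u) ∧
  (∀ t ∈ Icc (0:ℝ) 1, 0 ≤ γ t ∧ γ t ≤ 1) ∧
  γ 0 = 0 ∧ γ 1 = 0

/-- The energy in the characterization (6.11). -/
noncomputable def energy (f₁ : ℝ → ℝ) (s : ℝ) (γ γ' : ℝ → ℝ) : ℝ :=
  ∫ t in (0:ℝ)..1, Real.sqrt (s ^ 2 * (f₁ (Real.sqrt (γ t))) ^ 2 + (γ' t) ^ 2 / 4)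

/-- The cohesive energy density of pristine material, via characterization (6.11). -/
noncomputable def g0 (f₁ : ℝ → ℝ) (s : ℝ) : ℝ :=
  sInf {x | ∃ γ γ' : ℝ → ℝ, Admissible γ γ' ∧ x = energy f₁ s γ γ'}

/-!
Comparing with the path `γ ≡ 0` gives `g₀(s) ≤ s ℓ`. Let `M = max γ`. The slope `-ℓ₁` of `f₁` at `0`
and `f₁ ≥ 0` give `f₁(x) ≥ ℓ - K x` on `[0,1]`, so `s f₁(√γ) ≥ s (ℓ - K √M)`; and for `a ≤ s ℓ`,
`μ ∈ [0,1]` one has `√(a² + b²) ≥ a + μ b - s ℓ μ²`. Since `γ` climbs to `M` and returns to `0`, `∫ |γ'| ≥ 2 M`.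
Hence a minimizer satisfies `μ M ≤ s K √M + s ℓ μ²` for all `μ ∈ [0,1]`, and optimizing in `μ`
gives `M ≤ 4 K² s²` or `M³ ≤ 16 ℓ² K² s⁴`; both are `O(s^{4/3})` for `s ≤ 1`.
-/

open Topology

-- Cauchy–Schwarz against the unit vector (√(1 - μ²), μ), then `a √(1 - μ²) ≥ a - L μ²`.
theorem add_mul_sub_mul_sq_le_sqrt {a b L μ : ℝ} (haL : a ≤ L) (hL : 0 ≤ L)
    (hμ : μ ∈ Icc (0:ℝ) 1) :
    a + μ * b - L * μ ^ 2 ≤ √(a ^ 2 + b ^ 2) := by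
  set c := √(1 - μ ^ 2)
  have hc2 : c ^ 2 = 1 - μ ^ 2 := Real.sq_sqrt (by nlinarith [hμ.1, hμ.2])
  have hc0 : 0 ≤ c := Real.sqrt_nonneg _
  have hc1 : c ≤ 1 := by nlinarith [hμ.1]
  have cauchySchwarz : a * c + b * μ ≤ √(a ^ 2 + b ^ 2) :=
    (le_abs_self _).trans (Real.abs_le_sqrt (by nlinarith [sq_nonneg (a * μ - b * c)]))
  have : a - L * μ ^ 2 ≤ a * c := by nlinarith [mul_nonneg hL hc0]
  linarith

theorem exists_sub_mul_le_of_tendsto {f : ℝ → ℝ} {ℓ ℓ₁ : ℝ} (hℓ : 0 ≤ ℓ) (hf0 : f 0 = ℓ)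
    (hnonneg : ∀ x ∈ Icc (0:ℝ) 1, 0 ≤ f x)
    (hlim : Tendsto (fun s => (f s - ℓ + ℓ₁ * s) / s) (𝓝[>] 0) (𝓝 0)) :
    ∃ K, 0 ≤ K ∧ ∀ x ∈ Icc (0:ℝ) 1, ℓ - K * x ≤ f x := by
  obtain ⟨δ, hδ, hnear⟩ := mem_nhdsGT_iff_exists_Ioo_subset.mp
    (hlim.eventually (lt_mem_nhds (show (-1:ℝ) < 0 by norm_num)))
  have hδ : 0 < δ := hδ
  refine ⟨max (ℓ₁ + 1) (ℓ / δ), (div_nonneg hℓ hδ.le).trans (le_max_right _ _), ?_⟩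
  rintro x ⟨hx0, hx1⟩
  rcases hx0.eq_or_lt with rfl | hx0
  · simp [hf0]
  rcases lt_or_ge x δ with hxδ | hxδ
  · have h : -1 < (f x - ℓ + ℓ₁ * x) / x := hnear ⟨hx0, hxδ⟩
    rw [lt_div_iff₀ hx0] at h
    nlinarith [le_max_left (ℓ₁ + 1) (ℓ / δ)]
  · have : ℓ ≤ ℓ / δ * x := by
      rw [div_mul_eq_mul_div, le_div_iff₀ hδ]; exact mul_le_mul_of_nonneg_left hxδ hℓ
    nlinarith [le_max_right (ℓ₁ + 1) (ℓ / δ), hnonneg x ⟨hx0.le, hx1⟩]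

theorem IntervalIntegrable.sqrt_sq_add_sq {f g : ℝ → ℝ} {a b : ℝ}
    (hf : IntervalIntegrable f volume a b) (hg : IntervalIntegrable g volume a b) :
    IntervalIntegrable (fun t => √(f t ^ 2 + g t ^ 2)) volume a b := by
  refine (hf.abs.add hg.abs).mono_fun' ?_ (Eventually.of_forall fun t => ?_)
  · exact (by fun_prop : Continuous fun p : ℝ × ℝ => √(p.1 ^ 2 + p.2 ^ 2))
      |>.comp_aestronglyMeasurable
        (hf.aestronglyMeasurable_restrict_uIoc.prodMk hg.aestronglyMeasurable_restrict_uIoc)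
  · show ‖√(f t ^ 2 + g t ^ 2)‖ ≤ |f t| + |g t|
    rw [Real.norm_of_nonneg (Real.sqrt_nonneg _), Real.sqrt_le_iff]
    refine ⟨by positivity, ?_⟩
    nlinarith [sq_abs (f t), sq_abs (g t), mul_nonneg (abs_nonneg (f t)) (abs_nonneg (g t))]

namespace Admissible

variable {γ γ' : ℝ → ℝ}

theorem intervalIntegrable (h : Admissible γ γ') : IntervalIntegrable γ' volume 0 1 :=
  (intervalIntegrable_iff_integrableOn_Icc_of_le zero_le_one).mpr h.1

theorem continuousOn (h : Admissible γ γ') : ContinuousOn γ (Icc 0 1) :=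
  (intervalIntegral.continuousOn_primitive_Icc (μ := volume) h.1).congr fun t ht => by
    rw [h.2.1 t ht, intervalIntegral.integral_of_le ht.1]
    exact integral_Icc_eq_integral_Ioc.symm

theorem two_mul_le_integral_abs (h : Admissible γ γ') {t : ℝ} (ht : t ∈ Icc (0:ℝ) 1) :
    2 * γ t ≤ ∫ u in (0:ℝ)..1, |γ' u| := by
  have hγ' : ∀ {a b}, a ∈ Icc (0:ℝ) 1 → b ∈ Icc (0:ℝ) 1 →
      IntervalIntegrable γ' volume a b :=
    fun ha hb => h.intervalIntegrable.mono_set <| uIcc_subset_uIcc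
      (by rwa [uIcc_of_le zero_le_one]) (by rwa [uIcc_of_le zero_le_one])
  have h0 : (0:ℝ) ∈ Icc (0:ℝ) 1 := left_mem_Icc.mpr zero_le_one
  have h1 : (1:ℝ) ∈ Icc (0:ℝ) 1 := right_mem_Icc.mpr zero_le_one
  have left : γ t ≤ ∫ u in (0:ℝ)..t, |γ' u| := by
    rw [h.2.1 t ht]
    exact (le_abs_self _).trans (intervalIntegral.abs_integral_le_integral_abs ht.1)
  have right : γ t ≤ ∫ u in t..1, |γ' u| := by
    have : ∫ u in t..1, γ' u = -γ t := by
      rw [← intervalIntegral.integral_interval_sub_left (hγ' h0 h1) (hγ' h0 ht),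
        ← h.2.1 1 h1, ← h.2.1 t ht, h.2.2.2.2, zero_sub]
    calc γ t = -∫ u in t..1, γ' u := by rw [this, neg_neg]
      _ ≤ |∫ u in t..1, γ' u| := neg_le_abs _
      _ ≤ ∫ u in t..1, |γ' u| := intervalIntegral.abs_integral_le_integral_abs ht.2
  have split :=
    intervalIntegral.integral_add_adjacent_intervals (hγ' h0 ht).abs (hγ' ht h1).abs
  linarith

end Admissible

theorem admissible_zero : Admissible 0 0 := by
  refine ⟨integrableOn_zero, fun t _ => by simp, fun t _ => by simp, rfl, rfl⟩

theorem energy_zero (f₁ : ℝ → ℝ) (s : ℝ) : energy f₁ s 0 0 = |s * f₁ 0| := by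
  simp [energy, ← mul_pow, Real.sqrt_sq_eq_abs]

theorem g0_le_energy {f₁ γ γ' : ℝ → ℝ} (s : ℝ) (h : Admissible γ γ') :
    g0 f₁ s ≤ energy f₁ s γ γ' := by
  refine csInf_le ⟨0, ?_⟩ ⟨γ, γ', h, rfl⟩
  rintro _ ⟨_, _, -, rfl⟩
  exact intervalIntegral.integral_nonneg zero_le_one fun _ _ => Real.sqrt_nonneg _

theorem energy_eq_integral_sqrt (f₁ : ℝ → ℝ) (s : ℝ) (γ γ' : ℝ → ℝ) :
    energy f₁ s γ γ' = ∫ t in (0:ℝ)..1, √((s * f₁ √(γ t)) ^ 2 + (γ' t / 2) ^ 2) := by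
  unfold energy
  congr! 3
  ring

theorem Admissible.le_energy {f₁ γ γ' : ℝ → ℝ} {ℓ K s μ M : ℝ} (h : Admissible γ γ')
    (hf : ContinuousOn f₁ (Icc 0 1)) (hfℓ : ∀ x ∈ Icc (0:ℝ) 1, f₁ x ≤ ℓ)
    (hfK : ∀ x ∈ Icc (0:ℝ) 1, ℓ - K * x ≤ f₁ x) (hK : 0 ≤ K) (hℓ : 0 ≤ ℓ) (hs : 0 ≤ s)
    (hμ : μ ∈ Icc (0:ℝ) 1) (hM : ∀ t ∈ Icc (0:ℝ) 1, γ t ≤ M) :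
    s * (ℓ - K * √M) - s * ℓ * μ ^ 2 + μ / 2 * ∫ t in (0:ℝ)..1, |γ' t| ≤ energy f₁ s γ γ' := by
  have hmaps : MapsTo (fun t => √(γ t)) (Icc 0 1) (Icc 0 1) := fun t ht =>
    ⟨Real.sqrt_nonneg _, Real.sqrt_le_one.mpr (h.2.2.1 t ht).2⟩
  have hcont : ContinuousOn (fun t => s * f₁ √(γ t)) (Icc 0 1) :=
    continuousOn_const.mul (hf.comp h.continuousOn.sqrt hmaps)
  have hpointwise : ∀ t ∈ Icc (0:ℝ) 1, s * (ℓ - K * √M) - s * ℓ * μ ^ 2 + μ / 2 * |γ' t| ≤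
      √((s * f₁ √(γ t)) ^ 2 + (γ' t / 2) ^ 2) := by
    intro t ht
    have hlow : ℓ - K * √M ≤ f₁ √(γ t) := (hfK _ (hmaps ht)).trans' <| by
      gcongr; exact Real.sqrt_le_sqrt (hM t ht)
    have := add_mul_sub_mul_sq_le_sqrt (b := |γ' t| / 2)
      (mul_le_mul_of_nonneg_left (hfℓ _ (hmaps ht)) hs) (mul_nonneg hs hℓ) hμ
    rw [div_pow, sq_abs, ← div_pow] at this
    nlinarith [mul_le_mul_of_nonneg_left hlow hs]
  rw [energy_eq_integral_sqrt]
  refine le_trans (le_of_eq ?_) (intervalIntegral.integral_mono_on zero_le_one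
    (intervalIntegrable_const.add (h.intervalIntegrable.abs.const_mul _))
    ((hcont.intervalIntegrable_of_Icc zero_le_one).sqrt_sq_add_sq
      (h.intervalIntegrable.div_const 2)) hpointwise)
  rw [intervalIntegral.integral_add intervalIntegrable_const
    (h.intervalIntegrable.abs.const_mul _), intervalIntegral.integral_const_mul]
  simp

-- Optimize in `μ`: take `μ = M / (2 s ℓ)` when this is at most `1`, and `μ = 1` otherwise.
theorem le_mul_sq_or_cube_le_of_forall {M s K ℓ : ℝ} (hM : 0 ≤ M) (hs : 0 < s) (hℓ : 0 < ℓ)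
    (hK : 0 ≤ K) (h : ∀ μ ∈ Icc (0:ℝ) 1, μ * M ≤ s * K * √M + s * ℓ * μ ^ 2) :
    M ≤ 4 * K ^ 2 * s ^ 2 ∨ M ^ 3 ≤ 16 * ℓ ^ 2 * K ^ 2 * s ^ 4 := by
  obtain ⟨x, hx, rfl⟩ : ∃ x, 0 ≤ x ∧ M = x ^ 2 := ⟨√M, Real.sqrt_nonneg M, (Real.sq_sqrt hM).symm⟩
  rw [Real.sqrt_sq hx] at h
  have hsℓ : 0 < s * ℓ := mul_pos hs hℓ
  by_cases hc : x ^ 2 ≤ 2 * (s * ℓ)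
  · right
    set μ := x ^ 2 / (2 * (s * ℓ))
    have hμ : μ * (2 * (s * ℓ)) = x ^ 2 := div_mul_cancel₀ _ (by positivity)
    have h' := h μ ⟨by positivity, div_le_one_of_le₀ hc (by positivity)⟩
    have hx4 : (x ^ 2) ^ 2 ≤ 4 * s ^ 2 * ℓ * K * x := by
      rw [← hμ]; nlinarith [mul_pos hs hsℓ]
    have hx3 : x ^ 3 ≤ 4 * s ^ 2 * ℓ * K := by
      rcases hx.eq_or_lt with rfl | hx0
      · rw [zero_pow three_ne_zero]; positivity
      · nlinarith [pow_pos hx0 3]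
    calc (x ^ 2) ^ 3 = (x ^ 3) ^ 2 := by ring
      _ ≤ (4 * s ^ 2 * ℓ * K) ^ 2 := pow_le_pow_left₀ (by positivity) hx3 2
      _ = 16 * ℓ ^ 2 * K ^ 2 * s ^ 4 := by ring
  · left
    have h' := h 1 ⟨zero_le_one, le_rfl⟩
    have hx0 : 0 < x := by nlinarith
    have : x ≤ 2 * s * K := by nlinarith
    nlinarith

theorem le_mul_rpow_of_le_mul_sq_or_cube_le {M s A B : ℝ} (hs : 0 < s) (hs1 : s ≤ 1)
    (hA : 0 ≤ A) (hB : 0 ≤ B) (h : M ≤ A * s ^ 2 ∨ M ^ 3 ≤ B * s ^ 4) :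
    M ≤ (A + B + 1) * s ^ ((4:ℝ) / 3) := by
  set t := s ^ ((4:ℝ) / 3)
  have ht : 0 < t := Real.rpow_pos_of_pos hs _
  have ht3 : t ^ 3 = s ^ 4 := by
    rw [← Real.rpow_natCast, ← Real.rpow_mul hs.le]; norm_num
  have hst : s ^ 2 ≤ t := by
    rw [← Real.rpow_natCast]
    exact Real.rpow_le_rpow_of_exponent_ge hs hs1 (by norm_num)
  rcases h with h | h
  · nlinarith
  · by_contra! hlt
    have hC : B ≤ (A + B + 1) ^ 3 := by
      nlinarith [one_le_pow₀ (show 1 ≤ A + B + 1 by linarith) (n := 2)]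
    have := pow_lt_pow_left₀ hlt (by positivity) three_ne_zero
    rw [mul_pow, ht3] at this
    nlinarith [pow_pos hs 4]

/-- there are `C > 0` and `s₀ > 0` such that every minimizer `γ` for `g₀(s)` with
`s ∈ (0, s₀)` satisfies `max_{[0,1]} γ ≤ C s^{4/3}`. -/
theorem stmt_10 (ℓ ℓ₁ : ℝ) (f₁ : ℝ → ℝ) (hf : F1Hyp ℓ ℓ₁ f₁) :
    ∃ C : ℝ, 0 < C ∧ ∃ s₀ : ℝ, 0 < s₀ ∧ ∀ s : ℝ, 0 < s → s < s₀ →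
      ∀ γ γ' : ℝ → ℝ, Admissible γ γ' → energy f₁ s γ γ' = g0 f₁ s →
        ∀ t ∈ Icc (0:ℝ) 1, γ t ≤ C * s ^ ((4:ℝ)/3) := by
  obtain ⟨K, hK, hfK⟩ := exists_sub_mul_le_of_tendsto hf.hl.le hf.f10 hf.nonneg hf.lim0
  have hfℓ : ∀ x ∈ Icc (0:ℝ) 1, f₁ x ≤ ℓ := fun x hx =>
    hf.f10 ▸ hf.anti.antitoneOn (left_mem_Icc.mpr zero_le_one) hx hx.1
  refine ⟨4 * K ^ 2 + 16 * ℓ ^ 2 * K ^ 2 + 1, by positivity, 1, one_pos, ?_⟩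
  intro s hs hs1 γ γ' hadm hmin t ht
  obtain ⟨t₀, ht₀, hmax⟩ :=
    isCompact_Icc.exists_isMaxOn (nonempty_Icc.mpr zero_le_one) hadm.continuousOn
  have henergy : energy f₁ s γ γ' ≤ s * ℓ := by
    simpa [hmin, energy_zero, hf.f10, abs_of_pos (mul_pos hs hf.hl)] using
      g0_le_energy (f₁ := f₁) s admissible_zero
  have hμ : ∀ μ ∈ Icc (0:ℝ) 1, μ * γ t₀ ≤ s * K * √(γ t₀) + s * ℓ * μ ^ 2 := by
    intro μ hμ
    have hlow := hadm.le_energy hf.cont hfℓ hfK hK hf.hl.le hs.le hμ hmax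
    nlinarith [mul_le_mul_of_nonneg_left (hadm.two_mul_le_integral_abs ht₀) hμ.1]
  exact (hmax ht).trans <| le_mul_rpow_of_le_mul_sq_or_cube_le hs hs1.le (by positivity)
    (by positivity) <| le_mul_sq_or_cube_le_of_forall (hadm.2.2.1 t₀ ht₀).1 hs hf.hl hK hμ
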